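/- Fix an integer n ≥ 1 and an integer r ≥ 2, and let A, B, C be pairwise distinct elements of F_r(n). Then the sequence (γ(A,B), γ(A,C), γ(B,C)) is monotone with respect to the order <_{r-1} on F_{r-1}(n): it is either nondecreasing or nonincreasing. -/

import Mathlib

open scoped Classical

/-- The carrier type of the set `F_r(n)`: `F_1(n) ⊆ Bool` (with `false = -` and
`true = +`), `F_2(n) ⊆ ℕ × ℕ`, and `F_r(n)` consists of finite sets of elements of
`F_{r-1}(n)` for `r ≥ 3`. -/
def FT : ℕ → Type
  | 0 => Bool
  | 1 => Bool
  | 2 => ℕ × ℕ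
  | (r + 3) => Finset (FT (r + 2))

/-- Decidable equality for `FT r`. -/
def FTdecEq : (r : ℕ) → DecidableEq (FT r)
  | 0 => inferInstanceAs (DecidableEq Bool)
  | 1 => inferInstanceAs (DecidableEq Bool)
  | 2 => inferInstanceAs (DecidableEq (ℕ × ℕ))
  | (r + 3) => letI := FTdecEq (r + 2); inferInstanceAs (DecidableEq (Finset (FT (r + 2))))

attribute [instance] FTdecEq

/-- `FT r` is inhabited. -/
def FTinhab : (r : ℕ) → Inhabited (FT r)
  | 0 => ⟨false⟩
  | 1 => ⟨false⟩
  | 2 => ⟨(0, 0)⟩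
  | (r + 3) => letI := FTdecEq (r + 2); ⟨(∅ : Finset (FT (r + 2)))⟩

attribute [instance] FTinhab

/-- The data attached to level `r` of the construction: membership in `F_r(n)`, in
`F_r^-(n)` and in `F_r^+(n)`, the map `σ_r` and the relation `<_r`. -/
structure LevelData (α : Type) where
  mem : α → Prop
  memMinus : α → Prop
  memPlus : α → Prop
  sigma : α → α
  lt : α → α → Prop

/-- The canonical representative of the `≡_r`-class of `a`: `a` itself if `a ∈ F_r^-(n)`
and `σ_r(a)` otherwise (identifying each `A ∈ F_r^-(n)` with `σ_r(A)`). -/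
noncomputable def LevelData.rep {α : Type} (D : LevelData α) (a : α) : α :=
  if D.memMinus a then a else D.sigma a

/-- The equivalence `≡_r`: `a ≡ b` iff `a = b`, `a = σ(b)` or `b = σ(a)`. -/
def LevelData.eqv {α : Type} (D : LevelData α) (a b : α) : Prop :=
  a = b ∨ a = D.sigma b ∨ b = D.sigma a

/-- The strict order `≺_r` on `≡_r`-equivalence classes (as a relation on elements):
identifying each `A ∈ F_r^-(n)` with `σ_r(A)`, the class of `a` strictly precedes the
class of `b` iff the representatives are distinct and `rep a <_r rep b`. -/
noncomputable def LevelData.prec {α : Type} (D : LevelData α) (a b : α) : Prop :=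
  D.rep a ≠ D.rep b ∧ D.lt (D.rep a) (D.rep b)

/-- `γ(A,B)` for `r ≥ 3`: the element of `B` lying in the `≺_{r-1}`-first equivalence
class on which `A` and `B` differ. (For transversals `A ≠ B` this is the unique element
`b ∈ B ∖ A` whose class weakly precedes the class of every element of `B ∖ A`.) -/
noncomputable def gammaOf {α : Type} [DecidableEq α] [Nonempty α] (D : LevelData α)
    (A B : Finset α) : α :=
  Classical.epsilon (fun b => b ∈ B \ A ∧ ∀ b' ∈ B \ A, b' = b ∨ D.prec b b')

/-- The construction of level `r` data from level `r-1` data (for `r ≥ 3`):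
`F_r(n)` consists of the sets containing exactly one element from each
`≡_{r-1}`-equivalence class; `F_r^-(n)` (resp. `F_r^+(n)`) consists of those members
containing the `<_{r-1}`-minimum (resp. maximum) of `F_{r-1}(n)`;
`σ_r(X) = {σ_{r-1}(A) : A ∈ X}`; and `A <_r B` iff `γ(A,B) ∈ F_{r-1}^+(n)`. -/
noncomputable def levelSucc {α : Type} [DecidableEq α] [Nonempty α] (D : LevelData α) :
    LevelData (Finset α) where
  mem X := (∀ a ∈ X, D.mem a) ∧ ∀ a, D.mem a → (a ∈ X ↔ D.sigma a ∉ X)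
  memMinus X :=
    Classical.epsilon (fun M => D.mem M ∧ ∀ B, D.mem B → B ≠ M → D.lt M B) ∈ X
  memPlus X :=
    Classical.epsilon (fun M => D.mem M ∧ ∀ B, D.mem B → B ≠ M → D.lt B M) ∈ X
  sigma X := X.image D.sigma
  lt A B := D.memPlus (gammaOf D A B)

/-- Level 1: `F_1(n) = {-,+}` with `- = false` and `+ = true`, `σ_1(-) = +`, and
`- <_1 +`. -/
noncomputable def level1 : LevelData (FT 1) where
  mem _ := True
  memMinus b := b = false
  memPlus b := b = true
  sigma b := Bool.not b
  lt a b := a = false ∧ b = true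

/-- Level 2: `F_2^-(n) = {(2n-i+1, i) : 1 ≤ i ≤ n}`, `F_2^+(n) = {(i, 2n-i+1) : 1 ≤ i ≤ n}`,
`σ_2` swaps the coordinates, and `(a₁,a₂) <_2 (b₁,b₂)` iff `a₁ > b₁`. -/
noncomputable def level2 (n : ℕ) : LevelData (FT 2) where
  mem p := ∃ i : ℕ, 1 ≤ i ∧ i ≤ n ∧ (p = (2 * n - i + 1, i) ∨ p = (i, 2 * n - i + 1))
  memMinus p := ∃ i : ℕ, 1 ≤ i ∧ i ≤ n ∧ p = (2 * n - i + 1, i)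
  memPlus p := ∃ i : ℕ, 1 ≤ i ∧ i ≤ n ∧ p = (i, 2 * n - i + 1)
  sigma p := (p.2, p.1)
  lt p q := q.1 < p.1

/-- The level data of the construction, for every level `r` (levels `0` and `1` both
carry the level-1 data). -/
noncomputable def L (n : ℕ) : (r : ℕ) → LevelData (FT r)
  | 0 => level1
  | 1 => level1
  | 2 => level2 n
  | (r + 3) => levelSucc (L n (r + 2))

/-- The map `γ : F_{k+2}(n) × F_{k+2}(n) → F_{k+1}(n)` (so `γ` at level `r = k + 2`).
For `r = 2`, `γ(A,B) = -` iff `A.1 < B.1`; for `r ≥ 3`, `γ(A,B)` is the element of `B`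
in the `≺_{r-1}`-first equivalence class on which `A` and `B` differ. -/
noncomputable def gam (n : ℕ) : (k : ℕ) → FT (k + 2) → FT (k + 2) → FT (k + 1)
  | 0, p, q => decide (q.1 < p.1)
  | (k + 1), A, B => gammaOf (L n (k + 2)) A B

/-- Membership in `F_r(n)`. -/
noncomputable def memF (n r : ℕ) : FT r → Prop := (L n r).mem

/-- The (non-strict) relation `≤_r`: `A <_r B` or `A = B`. -/
noncomputable def leF (n r : ℕ) (a b : FT r) : Prop := (L n r).lt a b ∨ a = b

/-- `Γ(B₁,…,B_k) = (γ(B₁,B₂),…,γ(B_{k-1},B_k))`, mapping sequences over `F_{k+2}(n)` to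
sequences over `F_{k+1}(n)`. -/
noncomputable def Gam (n k : ℕ) (l : List (FT (k + 2))) : List (FT (k + 1)) :=
  List.zipWith (gam n k) l l.tail

/-- `Γ^i`, iterated `i` times from level `b + i + 1` down to level `b + 1`. -/
noncomputable def GamIter (n : ℕ) :
    (i b : ℕ) → List (FT (b + i + 1)) → List (FT (b + 1))
  | 0, _, l => l
  | (i + 1), b, l => GamIter n i b (Gam n (b + i) l)

/-- The full iteration `Γ^{k+1}` from level `k + 2` down to level `1`. -/
noncomputable def GamFull (n : ℕ) : (k : ℕ) → List (FT (k + 2)) → List (FT 1)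
  | 0, l => Gam n 0 l
  | (k + 1), l => GamFull n k (Gam n (k + 1) l)

/-!
For `r = 2`, `γ(A,B) = +` iff `B₁ < A₁`, and the claim is a comparison of three first
coordinates.

For `r ≥ 3`, every level from `2` on is admissible: `σ` is a fixed-point-free involution, `<` is
a strict total order reversed by `σ`, `F⁻ = {a | a < σ a}` and `F⁺ = {a | σ a < a}`, and
`levelSucc` preserves this. The elements `γ(X,Y)` then behave like first differences in an
ultrametric: either `γ(A,B) = γ(A,C)`, or `γ(B,C) = γ(A,C)`, or the class of `γ(A,B)` precedes
that of `γ(A,C)` and `γ(B,C) = σ γ(A,B)`. In the last case `γ(A,C)` lies in a later class,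
hence strictly between `γ(A,B)` and `σ γ(A,B)`.
-/

theorem Finset.exists_minimum_of_total_of_trans {β : Type*} (r : β → β → Prop) {T : Finset β}
    (hT : T.Nonempty) (htot : ∀ a ∈ T, ∀ b ∈ T, a ≠ b → r a b ∨ r b a)
    (htrans : ∀ a ∈ T, ∀ b ∈ T, ∀ c ∈ T, r a b → r b c → r a c) :
    ∃ b ∈ T, ∀ b' ∈ T, b' = b ∨ r b b' := by
  induction hT using Finset.Nonempty.cons_induction with
  | singleton a =>
    exact ⟨a, Finset.mem_singleton_self a, fun b' hb' => Or.inl (Finset.mem_singleton.1 hb')⟩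
  | cons a s ha hs ih =>
    have hsub : ∀ x ∈ s, x ∈ Finset.cons a s ha := fun x hx => Finset.mem_cons_of_mem hx
    have haT : a ∈ Finset.cons a s ha := Finset.mem_cons_self a s
    obtain ⟨b, hb, hmin⟩ := ih (fun x hx y hy => htot x (hsub x hx) y (hsub y hy))
      (fun x hx y hy z hz => htrans x (hsub x hx) y (hsub y hy) z (hsub z hz))
    rcases htot a haT b (hsub b hb) (fun h => ha (h ▸ hb)) with hr | hr
    · refine ⟨a, haT, fun b' hb' => ?_⟩
      rcases Finset.mem_cons.1 hb' with rfl | hb'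
      · exact Or.inl rfl
      rcases hmin b' hb' with rfl | h
      · exact Or.inr hr
      · exact Or.inr (htrans a haT b (hsub b hb) b' (hsub b' hb') hr h)
    · refine ⟨b, hsub b hb, fun b' hb' => ?_⟩
      rcases Finset.mem_cons.1 hb' with rfl | hb'
      · exact Or.inr hr
      · exact hmin b' hb'

namespace LevelData

section Classes

variable {α : Type} {D : LevelData α} {a b u u' v v' w : α}

theorem rep_of_memMinus (h : D.memMinus a) : D.rep a = a := if_pos h

theorem rep_of_not_memMinus (h : ¬ D.memMinus a) : D.rep a = D.sigma a := if_neg h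

theorem prec_congr_left (h : D.rep u = D.rep u') : D.prec u v ↔ D.prec u' v := by
  rw [LevelData.prec, LevelData.prec, h]

theorem prec_congr_right (h : D.rep v = D.rep v') : D.prec u v ↔ D.prec u v' := by
  rw [LevelData.prec, LevelData.prec, h]

structure IsAdmissible (D : LevelData α) : Prop where
  mem_sigma : ∀ a, D.mem a → D.mem (D.sigma a)
  sigma_sigma : ∀ a, D.mem a → D.sigma (D.sigma a) = a
  sigma_ne : ∀ a, D.mem a → D.sigma a ≠ a
  lt_or_lt : ∀ a b, D.mem a → D.mem b → a ≠ b → D.lt a b ∨ D.lt b a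
  lt_asymm : ∀ a b, D.mem a → D.mem b → a ≠ b → D.lt a b → ¬ D.lt b a
  lt_trans : ∀ a b c, D.mem a → D.mem b → D.mem c → a ≠ c →
    D.lt a b → D.lt b c → D.lt a c
  lt_iff_sigma_lt_sigma : ∀ a b, D.mem a → D.mem b →
    (D.lt a b ↔ D.lt (D.sigma b) (D.sigma a))
  memMinus_iff : ∀ a, D.mem a → (D.memMinus a ↔ D.lt a (D.sigma a))
  memPlus_iff : ∀ a, D.mem a → (D.memPlus a ↔ D.lt (D.sigma a) a)
  exists_min : ∃ m, D.mem m ∧ ∀ b, D.mem b → b ≠ m → D.lt m b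
  exists_finset : ∃ S : Finset α, ∀ a, a ∈ S ↔ D.mem a

namespace IsAdmissible

variable (hD : D.IsAdmissible)
include hD

theorem lt_trichotomy (ha : D.mem a) (hb : D.mem b) : D.lt a b ∨ a = b ∨ D.lt b a := by
  by_cases h : a = b
  · exact Or.inr (Or.inl h)
  · exact (hD.lt_or_lt a b ha hb h).imp_right Or.inr

theorem memMinus_sigma_iff (ha : D.mem a) : D.memMinus (D.sigma a) ↔ ¬ D.memMinus a := by
  have hσa := hD.mem_sigma a ha
  rw [hD.memMinus_iff _ hσa, hD.sigma_sigma a ha, hD.memMinus_iff a ha]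
  exact ⟨hD.lt_asymm _ _ hσa ha (hD.sigma_ne a ha),
    (hD.lt_or_lt _ _ hσa ha (hD.sigma_ne a ha)).resolve_right⟩

theorem memPlus_iff_memMinus_sigma (ha : D.mem a) : D.memPlus a ↔ D.memMinus (D.sigma a) := by
  rw [hD.memPlus_iff a ha, hD.memMinus_iff _ (hD.mem_sigma a ha), hD.sigma_sigma a ha]

theorem memPlus_iff_not_memMinus (ha : D.mem a) : D.memPlus a ↔ ¬ D.memMinus a :=
  (hD.memPlus_iff_memMinus_sigma ha).trans (hD.memMinus_sigma_iff ha)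

theorem memPlus_sigma_iff (ha : D.mem a) : D.memPlus (D.sigma a) ↔ ¬ D.memPlus a := by
  rw [hD.memPlus_iff_memMinus_sigma (hD.mem_sigma a ha), hD.sigma_sigma a ha,
    hD.memPlus_iff_not_memMinus ha, not_not]

theorem ne_sigma_of_memMinus (hb : D.mem b) (hma : D.memMinus a) (hmb : D.memMinus b) :
    a ≠ D.sigma b := by
  rintro rfl
  exact (hD.memMinus_sigma_iff hb).1 hma hmb

theorem mem_rep (ha : D.mem a) : D.mem (D.rep a) := by
  by_cases h : D.memMinus a
  · rwa [rep_of_memMinus h]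
  · rw [rep_of_not_memMinus h]; exact hD.mem_sigma a ha

theorem memMinus_rep (ha : D.mem a) : D.memMinus (D.rep a) := by
  by_cases h : D.memMinus a
  · rwa [rep_of_memMinus h]
  · rwa [rep_of_not_memMinus h, hD.memMinus_sigma_iff ha]

theorem rep_sigma (ha : D.mem a) : D.rep (D.sigma a) = D.rep a := by
  by_cases h : D.memMinus a
  · rw [rep_of_memMinus h, rep_of_not_memMinus ((hD.memMinus_sigma_iff ha).not.2 (not_not.2 h)),
      hD.sigma_sigma a ha]
  · rw [rep_of_not_memMinus h, rep_of_memMinus ((hD.memMinus_sigma_iff ha).2 h)]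

theorem eq_rep_or_eq_sigma_rep (ha : D.mem a) : a = D.rep a ∨ a = D.sigma (D.rep a) := by
  by_cases h : D.memMinus a
  · exact Or.inl (rep_of_memMinus h).symm
  · exact Or.inr (by rw [rep_of_not_memMinus h, hD.sigma_sigma a ha])

theorem eq_sigma_of_rep_eq (hu : D.mem u) (hv : D.mem v) (h : D.rep u = D.rep v)
    (hne : u ≠ v) : v = D.sigma u := by
  rcases hD.eq_rep_or_eq_sigma_rep hu with hu' | hu' <;>
    rcases hD.eq_rep_or_eq_sigma_rep hv with hv' | hv'
  · exact absurd (hu'.trans (h.trans hv'.symm)) hne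
  · exact hv'.trans (congrArg D.sigma (h.symm.trans hu'.symm))
  · exact hv'.trans (h.symm.trans
      ((congrArg D.sigma hu').trans (hD.sigma_sigma _ (hD.mem_rep hu))).symm)
  · exact absurd (hu'.trans ((congrArg D.sigma h).trans hv'.symm)) hne

theorem prec_total (hu : D.mem u) (hv : D.mem v) (h : D.rep u ≠ D.rep v) :
    D.prec u v ∨ D.prec v u :=
  (hD.lt_or_lt _ _ (hD.mem_rep hu) (hD.mem_rep hv) h).imp (⟨h, ·⟩) (⟨Ne.symm h, ·⟩)

theorem prec_asymm (hu : D.mem u) (hv : D.mem v) (h : D.prec u v) : ¬ D.prec v u :=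
  fun h' => hD.lt_asymm _ _ (hD.mem_rep hu) (hD.mem_rep hv) h.1 h.2 h'.2

theorem prec_trans (hu : D.mem u) (hv : D.mem v) (hw : D.mem w) (huv : D.prec u v)
    (hvw : D.prec v w) : D.prec u w := by
  have hne : D.rep u ≠ D.rep w := fun e =>
    hD.prec_asymm hu hv huv ((prec_congr_right e.symm).1 hvw)
  exact ⟨hne, hD.lt_trans _ _ _ (hD.mem_rep hu) (hD.mem_rep hv) (hD.mem_rep hw) hne huv.2 hvw.2⟩

theorem prec_sigma_left (hu : D.mem u) : D.prec (D.sigma u) v ↔ D.prec u v :=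
  prec_congr_left (hD.rep_sigma hu)

theorem prec_sigma_right (hv : D.mem v) : D.prec u (D.sigma v) ↔ D.prec u v :=
  prec_congr_right (hD.rep_sigma hv)

-- With `m`, `m'` the minus representatives of `u`, `v`: `m < m' < σ m' < σ m`.
theorem between_of_prec (hu : D.mem u) (hv : D.mem v) (h : D.prec u v) :
    (D.lt u v ∧ D.lt v (D.sigma u)) ∨ (D.lt (D.sigma u) v ∧ D.lt v u) := by
  set m := D.rep u
  set m' := D.rep v
  have hm := hD.mem_rep hu
  have hm' := hD.mem_rep hv
  have hσm := hD.mem_sigma m hm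
  have hσm' := hD.mem_sigma m' hm'
  have h₁ : D.lt m m' := h.2
  have h₂ : D.lt m' (D.sigma m') := (hD.memMinus_iff m' hm').1 (hD.memMinus_rep hv)
  have h₃ : D.lt (D.sigma m') (D.sigma m) := (hD.lt_iff_sigma_lt_sigma m m' hm hm').1 h₁
  have hv' : D.lt m v ∧ D.lt v (D.sigma m) := by
    have hne : m ≠ D.sigma m' :=
      hD.ne_sigma_of_memMinus hm' (hD.memMinus_rep hu) (hD.memMinus_rep hv)
    have hne' : m' ≠ D.sigma m :=
      hD.ne_sigma_of_memMinus hm (hD.memMinus_rep hv) (hD.memMinus_rep hu)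
    rcases hD.eq_rep_or_eq_sigma_rep hv with e | e <;> rw [e]
    · exact ⟨h₁, hD.lt_trans _ _ _ hm' hσm' hσm hne' h₂ h₃⟩
    · exact ⟨hD.lt_trans _ _ _ hm hm' hσm' hne h₁ h₂, h₃⟩
  rcases hD.eq_rep_or_eq_sigma_rep hu with e | e <;> rw [e]
  · exact Or.inl hv'
  · rw [hD.sigma_sigma m hm]; exact Or.inr hv'

end IsAdmissible

end Classes

section Transversals

variable {α : Type} [DecidableEq α] [Nonempty α] {D : LevelData α} {X Y Z : Finset α}
  {a b : α}

theorem sigma_mem_iff_notMem (hX : (levelSucc D).mem X) (ha : D.mem a) :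
    D.sigma a ∈ X ↔ a ∉ X := by
  have := hX.2 a ha
  tauto

theorem sigma_notMem_of_mem (hX : (levelSucc D).mem X) (ha : D.mem a) (h : a ∈ X) :
    D.sigma a ∉ X :=
  (hX.2 a ha).1 h

theorem sigma_mem_of_notMem (hX : (levelSucc D).mem X) (ha : D.mem a) (h : a ∉ X) :
    D.sigma a ∈ X :=
  (sigma_mem_iff_notMem hX ha).2 h

theorem sdiff_nonempty_of_ne (hX : (levelSucc D).mem X) (hY : (levelSucc D).mem Y)
    (hXY : X ≠ Y) : (Y \ X).Nonempty := by
  rw [Finset.nonempty_iff_ne_empty, Ne, Finset.sdiff_eq_empty_iff_subset]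
  intro hYX
  refine hXY (Finset.Subset.antisymm (fun a haX => ?_) hYX)
  by_contra haY
  exact sigma_notMem_of_mem hX (hX.1 a haX) haX (hYX (sigma_mem_of_notMem hY (hX.1 a haX) haY))

namespace IsAdmissible

variable (hD : D.IsAdmissible)
include hD

theorem rep_ne_of_mem (hX : (levelSucc D).mem X) (ha : a ∈ X) (hb : b ∈ X) (hne : a ≠ b) :
    D.rep a ≠ D.rep b := fun h =>
  sigma_notMem_of_mem hX (hX.1 a ha) ha (hD.eq_sigma_of_rep_eq (hX.1 a ha) (hX.1 b hb) h hne ▸ hb)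

theorem exists_gammaOf_spec (hX : (levelSucc D).mem X) (hY : (levelSucc D).mem Y) (hXY : X ≠ Y) :
    ∃ b ∈ Y \ X, ∀ b' ∈ Y \ X, b' = b ∨ D.prec b b' := by
  have hmem : ∀ x ∈ Y \ X, D.mem x := fun x hx => hY.1 x (Finset.mem_sdiff.1 hx).1
  refine Finset.exists_minimum_of_total_of_trans D.prec (sdiff_nonempty_of_ne hX hY hXY)
    (fun x hx y hy hne => hD.prec_total (hmem x hx) (hmem y hy) ?_)
    (fun x hx y hy z hz => hD.prec_trans (hmem x hx) (hmem y hy) (hmem z hz))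
  exact hD.rep_ne_of_mem hY (Finset.mem_sdiff.1 hx).1 (Finset.mem_sdiff.1 hy).1 hne

theorem gammaOf_spec (hX : (levelSucc D).mem X) (hY : (levelSucc D).mem Y) (hXY : X ≠ Y) :
    gammaOf D X Y ∈ Y \ X ∧
      ∀ b' ∈ Y \ X, b' = gammaOf D X Y ∨ D.prec (gammaOf D X Y) b' :=
  Classical.epsilon_spec (hD.exists_gammaOf_spec hX hY hXY)

theorem gammaOf_mem_right (hX : (levelSucc D).mem X) (hY : (levelSucc D).mem Y) (hXY : X ≠ Y) :
    gammaOf D X Y ∈ Y :=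
  (Finset.mem_sdiff.1 (hD.gammaOf_spec hX hY hXY).1).1

theorem gammaOf_notMem_left (hX : (levelSucc D).mem X) (hY : (levelSucc D).mem Y)
    (hXY : X ≠ Y) : gammaOf D X Y ∉ X :=
  (Finset.mem_sdiff.1 (hD.gammaOf_spec hX hY hXY).1).2

theorem mem_gammaOf (hX : (levelSucc D).mem X) (hY : (levelSucc D).mem Y) (hXY : X ≠ Y) :
    D.mem (gammaOf D X Y) :=
  hY.1 _ (hD.gammaOf_mem_right hX hY hXY)

theorem not_prec_gammaOf (hX : (levelSucc D).mem X) (hY : (levelSucc D).mem Y) (hXY : X ≠ Y)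
    (hb : b ∈ Y \ X) : ¬ D.prec b (gammaOf D X Y) := fun h => by
  rcases (hD.gammaOf_spec hX hY hXY).2 b hb with e | h'
  · exact h.1 (congrArg D.rep e)
  · exact hD.prec_asymm (hD.mem_gammaOf hX hY hXY) (hY.1 b (Finset.mem_sdiff.1 hb).1) h' h

theorem gammaOf_eq (hX : (levelSucc D).mem X) (hY : (levelSucc D).mem Y) (hXY : X ≠ Y)
    (hb : b ∈ Y \ X) (hmin : ∀ b' ∈ Y \ X, b' = b ∨ D.prec b b') : gammaOf D X Y = b :=
  (hmin _ (hD.gammaOf_spec hX hY hXY).1).resolve_right (hD.not_prec_gammaOf hX hY hXY hb)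

theorem mem_iff_mem_of_prec_gammaOf (hX : (levelSucc D).mem X) (hY : (levelSucc D).mem Y)
    (hXY : X ≠ Y) (hb : D.mem b) (h : D.prec b (gammaOf D X Y)) : b ∈ X ↔ b ∈ Y := by
  constructor
  · intro hbX
    by_contra hbY
    refine hD.not_prec_gammaOf hX hY hXY ?_ ((hD.prec_sigma_left hb).2 h)
    exact Finset.mem_sdiff.2 ⟨sigma_mem_of_notMem hY hb hbY, sigma_notMem_of_mem hX hb hbX⟩
  · intro hbY
    by_contra hbX
    exact hD.not_prec_gammaOf hX hY hXY (Finset.mem_sdiff.2 ⟨hbY, hbX⟩) h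

theorem gammaOf_swap (hX : (levelSucc D).mem X) (hY : (levelSucc D).mem Y) (hXY : X ≠ Y) :
    gammaOf D Y X = D.sigma (gammaOf D X Y) := by
  have hg := hD.mem_gammaOf hX hY hXY
  obtain ⟨hgYX, hmin⟩ := hD.gammaOf_spec hX hY hXY
  obtain ⟨hgY, hgX⟩ := Finset.mem_sdiff.1 hgYX
  refine hD.gammaOf_eq hY hX hXY.symm
    (Finset.mem_sdiff.2 ⟨sigma_mem_of_notMem hX hg hgX, sigma_notMem_of_mem hY hg hgY⟩)
    fun b hb => ?_
  obtain ⟨hbX, hbY⟩ := Finset.mem_sdiff.1 hb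
  have hbm := hX.1 b hbX
  have hσb : D.sigma b ∈ Y \ X :=
    Finset.mem_sdiff.2 ⟨sigma_mem_of_notMem hY hbm hbY, sigma_notMem_of_mem hX hbm hbX⟩
  rcases hmin (D.sigma b) hσb with e | h
  · exact Or.inl ((hD.sigma_sigma b hbm).symm.trans (congrArg D.sigma e))
  · exact Or.inr ((hD.prec_sigma_left hg).2 ((hD.prec_sigma_right hbm).1 h))

theorem gammaOf_eq_of_rep_eq (hX : (levelSucc D).mem X) (hY : (levelSucc D).mem Y)
    (hZ : (levelSucc D).mem Z) (hXY : X ≠ Y) (hXZ : X ≠ Z)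
    (h : D.rep (gammaOf D X Y) = D.rep (gammaOf D X Z)) : gammaOf D X Y = gammaOf D X Z := by
  by_contra hne
  have hg := hD.mem_gammaOf hX hY hXY
  have e := hD.eq_sigma_of_rep_eq hg (hD.mem_gammaOf hX hZ hXZ) h hne
  exact hD.gammaOf_notMem_left hX hZ hXZ
    (e ▸ sigma_mem_of_notMem hX hg (hD.gammaOf_notMem_left hX hY hXY))

-- `Y` and `Z` agree with `X` on the classes before that of `γ(X,Y)`, and on that class `Z`
-- still carries the element `σ γ(X,Y)` of `X`.
theorem gammaOf_eq_sigma_of_prec (hX : (levelSucc D).mem X) (hY : (levelSucc D).mem Y)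
    (hZ : (levelSucc D).mem Z) (hXY : X ≠ Y) (hXZ : X ≠ Z) (hYZ : Y ≠ Z)
    (h : D.prec (gammaOf D X Y) (gammaOf D X Z)) :
    gammaOf D Y Z = D.sigma (gammaOf D X Y) := by
  set g := gammaOf D X Y
  have hg := hD.mem_gammaOf hX hY hXY
  have hgY : g ∈ Y := hD.gammaOf_mem_right hX hY hXY
  have hσgX : D.sigma g ∈ X := sigma_mem_of_notMem hX hg (hD.gammaOf_notMem_left hX hY hXY)
  have hσgZ : D.sigma g ∈ Z := (hD.mem_iff_mem_of_prec_gammaOf hX hZ hXZ (hD.mem_sigma g hg)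
    ((hD.prec_sigma_left hg).2 h)).1 hσgX
  refine hD.gammaOf_eq hY hZ hYZ (Finset.mem_sdiff.2 ⟨hσgZ, sigma_notMem_of_mem hY hg hgY⟩)
    fun b hb => ?_
  obtain ⟨hbZ, hbY⟩ := Finset.mem_sdiff.1 hb
  have hbm := hZ.1 b hbZ
  by_cases hbg : b = D.sigma g
  · exact Or.inl hbg
  refine Or.inr ((hD.prec_total (hD.mem_sigma g hg) hbm
    (hD.rep_ne_of_mem hZ hσgZ hbZ (Ne.symm hbg))).resolve_right fun hbσg => hbY ?_)
  have hbg' : D.prec b g := (hD.prec_sigma_right hg).1 hbσg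
  have hbγ : D.prec b (gammaOf D X Z) := hD.prec_trans hbm hg (hD.mem_gammaOf hX hZ hXZ) hbg' h
  exact (hD.mem_iff_mem_of_prec_gammaOf hX hY hXY hbm hbg').1
    ((hD.mem_iff_mem_of_prec_gammaOf hX hZ hXZ hbm hbγ).2 hbZ)

theorem gammaOf_eq_of_prec (hX : (levelSucc D).mem X) (hY : (levelSucc D).mem Y)
    (hZ : (levelSucc D).mem Z) (hXY : X ≠ Y) (hXZ : X ≠ Z) (hYZ : Y ≠ Z)
    (h : D.prec (gammaOf D X Z) (gammaOf D X Y)) : gammaOf D Y Z = gammaOf D X Z := by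
  rw [hD.gammaOf_swap hZ hY hYZ.symm, hD.gammaOf_eq_sigma_of_prec hX hZ hY hXZ hXY hYZ.symm h,
    hD.sigma_sigma _ (hD.mem_gammaOf hX hZ hXZ)]

theorem gammaOf_trichotomy (hX : (levelSucc D).mem X) (hY : (levelSucc D).mem Y)
    (hZ : (levelSucc D).mem Z) (hXY : X ≠ Y) (hXZ : X ≠ Z) (hYZ : Y ≠ Z) :
    gammaOf D X Y = gammaOf D X Z ∨
      (D.prec (gammaOf D X Y) (gammaOf D X Z) ∧ gammaOf D Y Z = D.sigma (gammaOf D X Y)) ∨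
      gammaOf D Y Z = gammaOf D X Z := by
  by_cases hrep : D.rep (gammaOf D X Y) = D.rep (gammaOf D X Z)
  · exact Or.inl (hD.gammaOf_eq_of_rep_eq hX hY hZ hXY hXZ hrep)
  rcases hD.prec_total (hD.mem_gammaOf hX hY hXY) (hD.mem_gammaOf hX hZ hXZ) hrep with h | h
  · exact Or.inr (Or.inl ⟨h, hD.gammaOf_eq_sigma_of_prec hX hY hZ hXY hXZ hYZ h⟩)
  · exact Or.inr (Or.inr (hD.gammaOf_eq_of_prec hX hY hZ hXY hXZ hYZ h))

theorem gammaOf_monotone (hX : (levelSucc D).mem X) (hY : (levelSucc D).mem Y)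
    (hZ : (levelSucc D).mem Z) (hXY : X ≠ Y) (hXZ : X ≠ Z) (hYZ : Y ≠ Z) :
    ((D.lt (gammaOf D X Y) (gammaOf D X Z) ∨ gammaOf D X Y = gammaOf D X Z) ∧
      (D.lt (gammaOf D X Z) (gammaOf D Y Z) ∨ gammaOf D X Z = gammaOf D Y Z)) ∨
    ((D.lt (gammaOf D Y Z) (gammaOf D X Z) ∨ gammaOf D Y Z = gammaOf D X Z) ∧
      (D.lt (gammaOf D X Z) (gammaOf D X Y) ∨ gammaOf D X Z = gammaOf D X Y)) := by
  have h₁ := hD.mem_gammaOf hX hY hXY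
  have h₂ := hD.mem_gammaOf hX hZ hXZ
  rcases hD.gammaOf_trichotomy hX hY hZ hXY hXZ hYZ with e | ⟨h, e⟩ | e <;> rw [e]
  · rcases hD.lt_trichotomy h₂ (hD.mem_gammaOf hY hZ hYZ) with h | h | h
    · exact Or.inl ⟨Or.inr rfl, Or.inl h⟩
    · exact Or.inl ⟨Or.inr rfl, Or.inr h⟩
    · exact Or.inr ⟨Or.inl h, Or.inr rfl⟩
  · rcases hD.between_of_prec h₁ h₂ h with ⟨h', h''⟩ | ⟨h', h''⟩
    · exact Or.inl ⟨Or.inl h', Or.inl h''⟩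
    · exact Or.inr ⟨Or.inl h', Or.inl h''⟩
  · rcases hD.lt_trichotomy h₁ h₂ with h | h | h
    · exact Or.inl ⟨Or.inl h, Or.inr rfl⟩
    · exact Or.inl ⟨Or.inr h, Or.inr rfl⟩
    · exact Or.inr ⟨Or.inr rfl, Or.inl h⟩

end IsAdmissible

end Transversals

noncomputable def minimum {α : Type} [Nonempty α] (D : LevelData α) : α :=
  Classical.epsilon fun M => D.mem M ∧ ∀ B, D.mem B → B ≠ M → D.lt M B

noncomputable def maximum {α : Type} [Nonempty α] (D : LevelData α) : α :=
  Classical.epsilon fun M => D.mem M ∧ ∀ B, D.mem B → B ≠ M → D.lt B M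

section Minimum

variable {α : Type} [Nonempty α] {D : LevelData α} {b : α}

namespace IsAdmissible

variable (hD : D.IsAdmissible)
include hD

theorem minimum_spec :
    D.mem D.minimum ∧ ∀ b, D.mem b → b ≠ D.minimum → D.lt D.minimum b :=
  Classical.epsilon_spec hD.exists_min

theorem memMinus_minimum : D.memMinus D.minimum := by
  obtain ⟨hm, hmin⟩ := hD.minimum_spec
  exact (hD.memMinus_iff _ hm).2 (hmin _ (hD.mem_sigma _ hm) (hD.sigma_ne _ hm))

theorem lt_sigma_minimum (hb : D.mem b) (hne : b ≠ D.sigma D.minimum) :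
    D.lt b (D.sigma D.minimum) := by
  obtain ⟨hm, hmin⟩ := hD.minimum_spec
  have hσb := hD.mem_sigma b hb
  have h := hmin _ hσb fun e => hne (by rw [← e, hD.sigma_sigma b hb])
  rwa [hD.lt_iff_sigma_lt_sigma _ _ hm hσb, hD.sigma_sigma b hb] at h

theorem maximum_eq_sigma_minimum : D.maximum = D.sigma D.minimum := by
  have hσm := hD.mem_sigma _ hD.minimum_spec.1
  obtain ⟨hM, hmax⟩ :
      D.mem D.maximum ∧ ∀ b, D.mem b → b ≠ D.maximum → D.lt b D.maximum :=
    Classical.epsilon_spec (p := fun M => D.mem M ∧ ∀ B, D.mem B → B ≠ M → D.lt B M)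
      ⟨_, hσm, fun b hb => hD.lt_sigma_minimum hb⟩
  by_contra hne
  exact hD.lt_asymm _ _ hM hσm hne (hD.lt_sigma_minimum hM hne) (hmax _ hσm (Ne.symm hne))

end IsAdmissible

end Minimum

section Succ

variable {α : Type} [DecidableEq α] [Nonempty α] {D : LevelData α} {X Y Z : Finset α}
  {a b : α}

namespace IsAdmissible

variable (hD : D.IsAdmissible)
include hD

theorem gammaOf_eq_of_rep_eq_minimum (hX : (levelSucc D).mem X) (hY : (levelSucc D).mem Y)
    (hXY : X ≠ Y) (hb : b ∈ Y \ X) (h : D.rep b = D.minimum) : gammaOf D X Y = b := by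
  have hbY := (Finset.mem_sdiff.1 hb).1
  refine hD.gammaOf_eq hX hY hXY hb fun b' hb' => or_iff_not_imp_left.2 fun hne => ?_
  have hb'Y := (Finset.mem_sdiff.1 hb').1
  have hrep : D.rep b' ≠ D.minimum := h ▸ hD.rep_ne_of_mem hY hb'Y hbY hne
  have hrm : D.rep D.minimum = D.minimum := rep_of_memMinus hD.memMinus_minimum
  refine (prec_congr_left (h.trans hrm.symm)).2 ⟨?_, ?_⟩ <;> rw [hrm]
  · exact Ne.symm hrep
  · exact hD.minimum_spec.2 _ (hD.mem_rep (hY.1 b' hb'Y)) hrep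

theorem mem_image_sigma_iff (hX : (levelSucc D).mem X) (ha : D.mem a) :
    a ∈ X.image D.sigma ↔ a ∉ X := by
  rw [Finset.mem_image]
  constructor
  · rintro ⟨b, hb, rfl⟩
    exact sigma_notMem_of_mem hX (hX.1 b hb) hb
  · exact fun h => ⟨D.sigma a, sigma_mem_of_notMem hX ha h, hD.sigma_sigma a ha⟩

theorem levelSucc_mem_image_sigma (hX : (levelSucc D).mem X) :
    (levelSucc D).mem (X.image D.sigma) := by
  refine ⟨fun a ha => ?_, fun a ha => ?_⟩
  · obtain ⟨b, hb, rfl⟩ := Finset.mem_image.1 ha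
    exact hD.mem_sigma b (hX.1 b hb)
  · rw [hD.mem_image_sigma_iff hX ha, hD.mem_image_sigma_iff hX (hD.mem_sigma a ha), not_not]
    exact (sigma_mem_iff_notMem hX ha).symm

theorem image_sigma_image_sigma (hX : (levelSucc D).mem X) :
    (X.image D.sigma).image D.sigma = X := by
  rw [Finset.image_image]
  exact (Finset.image_congr fun a ha => hD.sigma_sigma a (hX.1 a ha)).trans Finset.image_id

theorem image_sigma_ne (hX : (levelSucc D).mem X) : X.image D.sigma ≠ X := by
  have hm := hD.minimum_spec.1
  obtain ⟨a, ha⟩ : ∃ a, a ∈ X := by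
    by_cases h : D.minimum ∈ X
    · exact ⟨_, h⟩
    · exact ⟨_, sigma_mem_of_notMem hX hm h⟩
  intro e
  exact (hD.mem_image_sigma_iff hX (hX.1 a ha)).1 (by rwa [e]) ha

theorem image_sigma_sdiff_image_sigma (hX : (levelSucc D).mem X) (hY : (levelSucc D).mem Y) :
    X.image D.sigma \ Y.image D.sigma = Y \ X := by
  ext c
  simp only [Finset.mem_sdiff]
  constructor
  · rintro ⟨hcX, hcY⟩
    have hc := (hD.levelSucc_mem_image_sigma hX).1 c hcX
    rw [hD.mem_image_sigma_iff hX hc] at hcX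
    rw [hD.mem_image_sigma_iff hY hc, not_not] at hcY
    exact ⟨hcY, hcX⟩
  · rintro ⟨hcY, hcX⟩
    have hc := hY.1 c hcY
    rw [hD.mem_image_sigma_iff hX hc, hD.mem_image_sigma_iff hY hc, not_not]
    exact ⟨hcX, hcY⟩

-- `X` and `σ X` differ on every class, so `γ(X, σ X)` lies in the class of the minimum.
theorem levelSucc_memMinus_iff (hX : (levelSucc D).mem X) :
    (levelSucc D).memMinus X ↔ (levelSucc D).lt X ((levelSucc D).sigma X) := by
  have hm := hD.minimum_spec.1
  have hσX := hD.levelSucc_mem_image_sigma hX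
  have hne := (hD.image_sigma_ne hX).symm
  change D.minimum ∈ X ↔ D.memPlus (gammaOf D X (X.image D.sigma))
  by_cases h : D.minimum ∈ X
  · have hσ := sigma_notMem_of_mem hX hm h
    rw [hD.gammaOf_eq_of_rep_eq_minimum hX hσX hne
      (Finset.mem_sdiff.2 ⟨(hD.mem_image_sigma_iff hX (hD.mem_sigma _ hm)).2 hσ, hσ⟩)
      ((hD.rep_sigma hm).trans (rep_of_memMinus hD.memMinus_minimum)),
      hD.memPlus_sigma_iff hm, hD.memPlus_iff_not_memMinus hm, not_not]
    exact iff_of_true h hD.memMinus_minimum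
  · rw [hD.gammaOf_eq_of_rep_eq_minimum hX hσX hne
      (Finset.mem_sdiff.2 ⟨(hD.mem_image_sigma_iff hX hm).2 h, h⟩)
      (rep_of_memMinus hD.memMinus_minimum), hD.memPlus_iff_not_memMinus hm]
    exact iff_of_false h (not_not.2 hD.memMinus_minimum)

theorem levelSucc_memPlus_iff (hX : (levelSucc D).mem X) :
    (levelSucc D).memPlus X ↔ (levelSucc D).lt ((levelSucc D).sigma X) X := by
  have hm := hD.minimum_spec.1
  have h := hD.levelSucc_memMinus_iff (hD.levelSucc_mem_image_sigma hX)
  change D.minimum ∈ X.image D.sigma ↔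
    (levelSucc D).lt (X.image D.sigma) ((X.image D.sigma).image D.sigma) at h
  rw [hD.image_sigma_image_sigma hX] at h
  change D.maximum ∈ X ↔ _
  rw [hD.maximum_eq_sigma_minimum, sigma_mem_iff_notMem hX hm,
    ← hD.mem_image_sigma_iff hX hm]
  exact h

theorem levelSucc_lt_swap_iff (hX : (levelSucc D).mem X) (hY : (levelSucc D).mem Y)
    (hXY : X ≠ Y) : (levelSucc D).lt Y X ↔ ¬ (levelSucc D).lt X Y := by
  change D.memPlus (gammaOf D Y X) ↔ ¬ D.memPlus (gammaOf D X Y)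
  rw [hD.gammaOf_swap hX hY hXY, hD.memPlus_sigma_iff (hD.mem_gammaOf hX hY hXY)]

theorem levelSucc_lt_trans (hX : (levelSucc D).mem X) (hY : (levelSucc D).mem Y)
    (hZ : (levelSucc D).mem Z) (hXZ : X ≠ Z) (hXY' : (levelSucc D).lt X Y)
    (hYZ' : (levelSucc D).lt Y Z) : (levelSucc D).lt X Z := by
  rcases eq_or_ne X Y with rfl | hXY
  · exact hYZ'
  rcases eq_or_ne Y Z with rfl | hYZ
  · exact hXY'
  change D.memPlus _ at hXY' hYZ' ⊢
  rcases hD.gammaOf_trichotomy hX hY hZ hXY hXZ hYZ with e | ⟨-, e⟩ | e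
  · rwa [← e]
  · rw [e, hD.memPlus_sigma_iff (hD.mem_gammaOf hX hY hXY)] at hYZ'
    exact absurd hXY' hYZ'
  · rwa [← e]

theorem levelSucc_lt_iff_sigma_lt_sigma (hX : (levelSucc D).mem X) (hY : (levelSucc D).mem Y) :
    (levelSucc D).lt X Y ↔ (levelSucc D).lt ((levelSucc D).sigma Y) ((levelSucc D).sigma X) := by
  change D.memPlus (gammaOf D X Y) ↔ D.memPlus (gammaOf D (Y.image D.sigma) (X.image D.sigma))
  rw [gammaOf, gammaOf, hD.image_sigma_sdiff_image_sigma hX hY]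

theorem levelSucc_exists_min :
    ∃ M, (levelSucc D).mem M ∧
      ∀ Y, (levelSucc D).mem Y → Y ≠ M → (levelSucc D).lt M Y := by
  obtain ⟨S, hS⟩ := hD.exists_finset
  have hM : ∀ a, a ∈ S.filter D.memMinus ↔ D.mem a ∧ D.memMinus a := by
    simp only [Finset.mem_filter, hS, implies_true]
  have hMmem : (levelSucc D).mem (S.filter D.memMinus) := by
    refine ⟨fun a ha => ((hM a).1 ha).1, fun a ha => ?_⟩
    rw [hM, hM, hD.memMinus_sigma_iff ha]
    simp only [ha, hD.mem_sigma a ha, true_and, not_not]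
  refine ⟨_, hMmem, fun Y hY hYM => ?_⟩
  have hg := hD.mem_gammaOf hMmem hY hYM.symm
  exact (hD.memPlus_iff_not_memMinus hg).2 fun h =>
    hD.gammaOf_notMem_left hMmem hY hYM.symm ((hM _).2 ⟨hg, h⟩)

theorem levelSucc_exists_finset :
    ∃ T : Finset (Finset α), ∀ X, X ∈ T ↔ (levelSucc D).mem X := by
  obtain ⟨S, hS⟩ := hD.exists_finset
  refine ⟨S.powerset.filter (levelSucc D).mem, fun X => ?_⟩
  rw [Finset.mem_filter, Finset.mem_powerset, and_iff_right_iff_imp]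
  exact fun hX a ha => (hS a).2 (hX.1 a ha)

theorem levelSucc : (levelSucc D).IsAdmissible where
  mem_sigma _ := hD.levelSucc_mem_image_sigma
  sigma_sigma _ := hD.image_sigma_image_sigma
  sigma_ne _ := hD.image_sigma_ne
  lt_or_lt _ _ hX hY hXY := or_iff_not_imp_left.2 (hD.levelSucc_lt_swap_iff hX hY hXY).2
  lt_asymm _ _ hX hY hXY := (hD.levelSucc_lt_swap_iff hY hX hXY.symm).1
  lt_trans _ _ _ hX hY hZ := hD.levelSucc_lt_trans hX hY hZ
  lt_iff_sigma_lt_sigma _ _ := hD.levelSucc_lt_iff_sigma_lt_sigma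
  memMinus_iff _ := hD.levelSucc_memMinus_iff
  memPlus_iff _ := hD.levelSucc_memPlus_iff
  exists_min := hD.levelSucc_exists_min
  exists_finset := hD.levelSucc_exists_finset

end IsAdmissible

end Succ

end LevelData

section Level2

variable {n : ℕ} {p q : FT 2}

theorem level2_mem_iff :
    (level2 n).mem p ↔ p.1 + p.2 = 2 * n + 1 ∧ 1 ≤ p.1 ∧ p.1 ≤ 2 * n := by
  obtain ⟨a, b⟩ := p
  change (∃ i, 1 ≤ i ∧ i ≤ n ∧
    ((a, b) = (2 * n - i + 1, i) ∨ (a, b) = (i, 2 * n - i + 1))) ↔ _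
  simp only [Prod.mk.injEq]
  constructor
  · rintro ⟨i, h₁, h₂, ⟨rfl, rfl⟩ | ⟨rfl, rfl⟩⟩ <;> omega
  · rintro ⟨hs, h₁, h₂⟩
    rcases le_or_gt a n with h | h
    · exact ⟨a, h₁, h, Or.inr ⟨rfl, by omega⟩⟩
    · exact ⟨b, by omega, by omega, Or.inl ⟨by omega, rfl⟩⟩

theorem level2_memMinus_iff :
    (level2 n).memMinus p ↔ p.1 + p.2 = 2 * n + 1 ∧ n + 1 ≤ p.1 ∧ p.1 ≤ 2 * n := by
  obtain ⟨a, b⟩ := p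
  change (∃ i, 1 ≤ i ∧ i ≤ n ∧ (a, b) = (2 * n - i + 1, i)) ↔ _
  simp only [Prod.mk.injEq]
  constructor
  · rintro ⟨i, h₁, h₂, rfl, rfl⟩; omega
  · rintro ⟨hs, h₁, h₂⟩; exact ⟨b, by omega, by omega, by omega, rfl⟩

theorem level2_memPlus_iff :
    (level2 n).memPlus p ↔ p.1 + p.2 = 2 * n + 1 ∧ 1 ≤ p.1 ∧ p.1 ≤ n := by
  obtain ⟨a, b⟩ := p
  change (∃ i, 1 ≤ i ∧ i ≤ n ∧ (a, b) = (i, 2 * n - i + 1)) ↔ _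
  simp only [Prod.mk.injEq]
  constructor
  · rintro ⟨i, h₁, h₂, rfl, rfl⟩; omega
  · rintro ⟨hs, h₁, h₂⟩; exact ⟨a, h₁, h₂, rfl, by omega⟩

theorem level2_sigma_fst : ((level2 n).sigma p).1 = p.2 := rfl

theorem level2_sigma_snd : ((level2 n).sigma p).2 = p.1 := rfl

theorem level2_lt : (level2 n).lt p q ↔ q.1 < p.1 := Iff.rfl

theorem FT_two_eq_iff : p = q ↔ p.1 = q.1 ∧ p.2 = q.2 := Prod.ext_iff

-- `FT 2` is not reducibly `ℕ × ℕ`, so the simp lemmas above only see terms of type `FT 2`;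
-- hence the map `f` here and the witness `p₀` below.
theorem level2_exists_finset : ∃ S : Finset (FT 2), ∀ p, p ∈ S ↔ (level2 n).mem p := by
  obtain ⟨f, hf⟩ : ∃ f : ℕ → FT 2, ∀ i, (f i).1 = i ∧ (f i).2 = 2 * n + 1 - i :=
    ⟨fun i => (i, 2 * n + 1 - i), fun _ => ⟨rfl, rfl⟩⟩
  refine ⟨(Finset.Icc 1 (2 * n)).image f, fun p => ?_⟩
  simp only [Finset.mem_image, Finset.mem_Icc, level2_mem_iff, FT_two_eq_iff]
  constructor
  · rintro ⟨i, hi, h₁, h₂⟩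
    have := hf i
    omega
  · rintro ⟨hs, h₁, h₂⟩
    exact ⟨p.1, ⟨h₁, h₂⟩, (hf p.1).1, by have := hf p.1; omega⟩

theorem level2_isAdmissible (hn : 1 ≤ n) : (level2 n).IsAdmissible := by
  obtain ⟨p₀, hp₀⟩ : ∃ p₀ : FT 2, p₀.1 = 2 * n ∧ p₀.2 = 1 :=
    ⟨(2 * n, 1), rfl, rfl⟩
  refine ⟨?_, ?_, ?_, ?_, ?_, ?_, ?_, ?_, ?_, ⟨p₀, ?_, ?_⟩, level2_exists_finset⟩ <;>
    intros <;>
    simp only [level2_mem_iff, level2_memMinus_iff, level2_memPlus_iff, level2_sigma_fst,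
      level2_sigma_snd, level2_lt, FT_two_eq_iff, ne_eq, and_self] at * <;>
    omega

end Level2

theorem L_isAdmissible {n : ℕ} (hn : 1 ≤ n) : ∀ j, (L n (j + 2)).IsAdmissible
  | 0 => level2_isAdmissible hn
  | j + 1 => (L_isAdmissible hn j).levelSucc

-- The equalities are taken in `Bool` rather than `FT 1` so that `decide_eq_true_eq` applies.
theorem leF_one_iff {n : ℕ} {x y : FT 1} :
    leF n 1 x y ↔ (@Eq Bool x true → @Eq Bool y true) := by
  change (x = false ∧ y = true) ∨ x = y ↔ _
  cases x <;> cases y <;> simp <;> trivial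

theorem gam_zero_monotone (n : ℕ) (A B C : FT 2) :
    (leF n 1 (gam n 0 A B) (gam n 0 A C) ∧ leF n 1 (gam n 0 A C) (gam n 0 B C)) ∨
    (leF n 1 (gam n 0 B C) (gam n 0 A C) ∧ leF n 1 (gam n 0 A C) (gam n 0 A B)) := by
  simp only [leF_one_iff]
  simp only [gam, decide_eq_true_eq]
  omega

/-- For pairwise distinct `A, B, C ∈ F_r(n)` (written `r = k + 2` so that `r ≥ 2`), the
sequence `(γ(A,B), γ(A,C), γ(B,C))` is monotone in `≤_{r-1}`: it is nondecreasing or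
nonincreasing. -/
theorem gamma_three_term_monotone (n : ℕ) (hn : 1 ≤ n) (k : ℕ) (A B C : FT (k + 2))
    (hA : memF n (k + 2) A) (hB : memF n (k + 2) B) (hC : memF n (k + 2) C)
    (hAB : A ≠ B) (hAC : A ≠ C) (hBC : B ≠ C) :
    (leF n (k + 1) (gam n k A B) (gam n k A C) ∧
      leF n (k + 1) (gam n k A C) (gam n k B C)) ∨
    (leF n (k + 1) (gam n k B C) (gam n k A C) ∧
      leF n (k + 1) (gam n k A C) (gam n k A B)) := by
  cases k with
  | zero => exact gam_zero_monotone n A B C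
  | succ j => exact (L_isAdmissible hn j).gammaOf_monotone hA hB hC hAB hAC hBC
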